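/- The E-optimal theorem: for a difference network with positive fluctuations s_e, the spectral norm ‖C({n_e})‖₂ = ‖F({n_e})^{-1}‖₂, minimized over allocations n_e ≥ 0 with Σ_e n_e = N, attains its minimum value (Σ_{i=1}^m a_i²)/N at the allocation n_{iμ_i} = N s_{iμ_i} (Σ_{j∈T_i} a_j)/(Σ_i a_i²) supported on a shortest-path tree, where a_i is the shortest-path distance from vertex 0 to i. -/

import Mathlib

open Finset Matrix

open Classical in
/-- The sum of `a` over the subtree rooted at `i` (parent map `μ`). -/
noncomputable def subtreeSum {m : ℕ} (μ : Fin (m + 1) → Fin (m + 1))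
    (a : Fin (m + 1) → ℝ) (i : Fin (m + 1)) : ℝ :=
  ∑ j ∈ univ.filter (fun j => ∃ k, μ^[k] j = i), a j

/-- A feasible allocation of a total measurement budget `N` to the edges of the
complete graph on `{0,…,m}`: symmetric, nonnegative, zero on the diagonal, and
summing to `N` over unordered pairs. -/
def Feasible {m : ℕ} (N : ℝ) (n : Fin (m + 1) → Fin (m + 1) → ℝ) : Prop :=
  (∀ i j, 0 ≤ n i j) ∧ (∀ i j, n i j = n j i) ∧ (∀ i, n i i = 0) ∧
    (∑ i, ∑ j ∈ univ.filter (fun j => i < j), n i j) = N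

/-- The Fisher information matrix of a difference network with fluctuations `s`
and allocation `n` (vertex `0` is the reference). -/
noncomputable def fisherMat {m : ℕ} (s n : Fin (m + 1) → Fin (m + 1) → ℝ) :
    Matrix (Fin m) (Fin m) ℝ :=
  Matrix.of fun i j =>
    if i = j then ∑ k ∈ univ.filter (fun k => k ≠ i.succ), n i.succ k / s i.succ k ^ 2
    else -(n i.succ j.succ / s i.succ j.succ ^ 2)

/-!
For any feasible allocation, testing the Fisher form on the distance vector `a` gives
`aᵀ F a = ½ Σ_{p,q} n_pq (a_p - a_q)² / s_pq² ≤ ½ Σ_{p,q} n_pq = N`, since `|a_p - a_q| ≤ s_pq`.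
Hence `λ_min F ≤ N / S` with `S = Σ_i a_i²`, that is `λ_max F⁻¹ ≥ S / N`.

For the tree allocation, `xᵀ F x = (N / S) Σ_{i ≠ 0} (x_i - x_{μ i})² T_i / s_{μ i, i}`, where `T_i`
is the sum of `a` over the subtree of `i`. Writing `x_j` as the telescoping sum of the increments
along the path from `j` to the root and applying Cauchy–Schwarz with the weights `s_e`, whose sum
along that path is `a_j`, gives `x_j² ≤ a_j Σ_{e ∈ E_j} (Δ_e x)² / s_e`; summing over `j` and
exchanging the order of summation yields `xᵀ F x ≥ (N / S) |x|²`. So `λ_min F = N / S` there.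
-/

namespace Matrix

variable {ι : Type*} [Fintype ι] [DecidableEq ι] {M : Matrix ι ι ℝ}

theorem inv_mem_spectrum_inv_iff (hM : IsUnit M) {r : ℝ} :
    r⁻¹ ∈ spectrum ℝ M⁻¹ ↔ r ∈ spectrum ℝ M := by
  simpa [coe_units_inv] using spectrum.inv₀_mem_inv_iff (a := hM.unit) (r := r)

theorem IsHermitian.forall_mul_dotProduct_le_iff (hM : M.IsHermitian) (c : ℝ) :
    (∀ x, c * (x ⬝ᵥ x) ≤ x ⬝ᵥ M *ᵥ x) ↔ ∀ t ∈ spectrum ℝ M, c ≤ t := by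
  have hsub : (M - c • 1).IsHermitian := hM.sub (isHermitian_one.smul (IsSelfAdjoint.all c))
  calc (∀ x, c * (x ⬝ᵥ x) ≤ x ⬝ᵥ M *ᵥ x) ↔ (M - c • 1).PosSemidef := by
        rw [posSemidef_iff_dotProduct_mulVec, and_iff_right hsub]
        simp [sub_mulVec, smul_mulVec, dotProduct_smul]
    _ ↔ spectrum ℝ (M - c • 1) ⊆ {t | 0 ≤ t} := by
        rw [posSemidef_iff_isHermitian_and_spectrum_nonneg, and_iff_right hsub]
    _ ↔ ∀ t ∈ spectrum ℝ M, c ≤ t := by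
        simp [← Algebra.algebraMap_eq_smul_one, ← spectrum.sub_singleton_eq, Set.subset_def]

theorem IsHermitian.posDef_of_forall_mul_dotProduct_le (hM : M.IsHermitian) {c : ℝ} (hc : 0 < c)
    (h : ∀ x, c * (x ⬝ᵥ x) ≤ x ⬝ᵥ M *ᵥ x) : M.PosDef := by
  refine hM.posDef_iff_eigenvalues_pos.mpr fun i => hc.trans_le ?_
  exact (hM.forall_mul_dotProduct_le_iff c).mp h _ (hM.eigenvalues_mem_spectrum_real i)

theorem PosDef.inv_le_sSup_spectrum_inv (hM : M.PosDef) {x : ι → ℝ} (hx : x ≠ 0) {c : ℝ}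
    (h : x ⬝ᵥ M *ᵥ x ≤ c * (x ⬝ᵥ x)) : c⁻¹ ≤ sSup (spectrum ℝ M⁻¹) := by
  have hxx : 0 < x ⬝ᵥ x := dotProduct_star_self_pos_iff.mpr hx
  obtain ⟨j, -⟩ := Function.ne_iff.mp hx
  obtain ⟨i, -, hi⟩ := exists_min_image univ hM.1.eigenvalues ⟨j, mem_univ j⟩
  set d := hM.1.eigenvalues i
  have hmin : ∀ t ∈ spectrum ℝ M, d ≤ t := by
    rw [hM.1.spectrum_real_eq_range_eigenvalues]
    rintro _ ⟨k, rfl⟩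
    exact hi k (mem_univ k)
  have hdc : d ≤ c := le_of_mul_le_mul_right
    (((hM.1.forall_mul_dotProduct_le_iff d).mpr hmin x).trans h) hxx
  have hmem : d⁻¹ ∈ spectrum ℝ M⁻¹ :=
    (inv_mem_spectrum_inv_iff hM.isUnit).mpr (hM.1.eigenvalues_mem_spectrum_real i)
  exact (inv_anti₀ (hM.eigenvalues_pos i) hdc).trans
    (le_csSup finite_real_spectrum.bddAbove hmem)

theorem IsHermitian.sSup_spectrum_inv_le (hM : M.IsHermitian) {c : ℝ} (hc : 0 < c)
    (h : ∀ x, c * (x ⬝ᵥ x) ≤ x ⬝ᵥ M *ᵥ x) : sSup (spectrum ℝ M⁻¹) ≤ c⁻¹ := by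
  have hle := (hM.forall_mul_dotProduct_le_iff c).mp h
  have hu : IsUnit M := (hM.posDef_of_forall_mul_dotProduct_le hc h).isUnit
  refine Real.sSup_le (fun t ht => ?_) (inv_nonneg.mpr hc.le)
  have hct : c ≤ t⁻¹ := hle _ ((inv_mem_spectrum_inv_iff hu).mp (by rwa [inv_inv]))
  simpa using inv_anti₀ hc hct

end Matrix

section RootedTree

variable {V : Type*} {μ : V → V} {r : V}

theorem iterate_eq_root_of_le (hμr : μ r = r) {j : V} {d k : ℕ} (hd : μ^[d] j = r)
    (hk : d ≤ k) : μ^[k] j = r := by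
  rw [← Nat.sub_add_cancel hk, Function.iterate_add_apply, hd, Function.iterate_fixed hμr]

theorem eq_root_of_isPeriodicPt (hμr : μ r = r) (hroot : ∀ i, ∃ k, μ^[k] i = r) {i : V} {c : ℕ}
    (hc : 0 < c) (h : Function.IsPeriodicPt μ c i) : i = r := by
  obtain ⟨k, hk⟩ := hroot i
  rw [← (h.mul_const k).eq]
  exact iterate_eq_root_of_le hμr hk (Nat.le_mul_of_pos_left k hc)

theorem parent_ne_self (hμr : μ r = r) (hroot : ∀ i, ∃ k, μ^[k] i = r) {i : V} (hi : i ≠ r) :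
    μ i ≠ i := fun h => hi (eq_root_of_isPeriodicPt hμr hroot one_pos (show μ^[1] i = i from h))

variable [DecidableEq V]

theorem injOn_iterate (hroot : ∀ i, ∃ k, μ^[k] i = r) (j : V) :
    Set.InjOn (fun k => μ^[k] j) (Set.Iio (Nat.find (hroot j))) := by
  have hne : ∀ t u, u < Nat.find (hroot j) → t < u → μ^[t] j ≠ μ^[u] j := by
    intro t u hu htu h
    refine Nat.find_min (hroot j) (m := Nat.find (hroot j) - u + t) (by omega) ?_
    rw [Function.iterate_add_apply, h, ← Function.iterate_add_apply, Nat.sub_add_cancel hu.le,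
      Nat.find_spec (hroot j)]
  intro t ht u hu h
  rcases lt_trichotomy t u with htu | rfl | hut
  · exact absurd h (hne t u hu htu)
  · rfl
  · exact absurd h.symm (hne u t ht hut)

variable [Fintype V]

open Classical in
/-- The non-root vertices on the path from `j` to the root. Vertex `i` stands for the tree edge
`(μ i, i)`, so this is the edge set `E_j`. -/
noncomputable def pathToRoot (μ : V → V) (r j : V) : Finset V :=
  univ.filter fun i => i ≠ r ∧ ∃ k, μ^[k] j = i

theorem mem_pathToRoot {i j : V} : i ∈ pathToRoot μ r j ↔ i ≠ r ∧ ∃ k, μ^[k] j = i := by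
  simp [pathToRoot]

theorem pathToRoot_eq_image (hμr : μ r = r) (hroot : ∀ i, ∃ k, μ^[k] i = r) (j : V) :
    pathToRoot μ r j = (range (Nat.find (hroot j))).image fun k => μ^[k] j := by
  ext i
  simp only [mem_pathToRoot, mem_image, mem_range]
  constructor
  · rintro ⟨hi, k, rfl⟩
    exact ⟨k, not_le.mp fun hk => hi (iterate_eq_root_of_le hμr (Nat.find_spec (hroot j)) hk),
      rfl⟩
  · rintro ⟨k, hk, rfl⟩
    exact ⟨Nat.find_min (hroot j) hk, k, rfl⟩

theorem sum_pathToRoot_sub_parent (hμr : μ r = r) (hroot : ∀ i, ∃ k, μ^[k] i = r)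
    (g : V → ℝ) (j : V) : ∑ i ∈ pathToRoot μ r j, (g i - g (μ i)) = g j - g r := by
  rw [pathToRoot_eq_image hμr hroot,
    sum_image fun t ht u hu => injOn_iterate hroot j (by simpa using ht) (by simpa using hu)]
  simp only [← Function.iterate_succ_apply' μ]
  rw [sum_range_sub' (fun k => g (μ^[k] j)), Nat.find_spec (hroot j), Function.iterate_zero_apply]

theorem sum_pathToRoot_parent_dist (hμr : μ r = r) (hroot : ∀ i, ∃ k, μ^[k] i = r)
    {s : V → V → ℝ} {a : V → ℝ} (ha_r : a r = 0)
    (ha_edge : ∀ i, i ≠ r → a i = a (μ i) + s (μ i) i) (j : V) :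
    ∑ i ∈ pathToRoot μ r j, s (μ i) i = a j := by
  rw [← sub_zero (a j), ← ha_r, ← sum_pathToRoot_sub_parent hμr hroot]
  refine sum_congr rfl fun i hi => ?_
  rw [ha_edge i (mem_pathToRoot.mp hi).1]
  ring

theorem sq_le_mul_sum_pathToRoot (hμr : μ r = r) (hroot : ∀ i, ∃ k, μ^[k] i = r)
    {s : V → V → ℝ} (hs : ∀ i, i ≠ r → 0 < s (μ i) i) {a : V → ℝ} (ha_r : a r = 0)
    (ha_edge : ∀ i, i ≠ r → a i = a (μ i) + s (μ i) i) {y : V → ℝ} (hy : y r = 0) (j : V) :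
    y j ^ 2 ≤ a j * ∑ i ∈ pathToRoot μ r j, (y i - y (μ i)) ^ 2 / s (μ i) i := by
  have hs' : ∀ i ∈ pathToRoot μ r j, 0 < s (μ i) i := fun i hi => hs i (mem_pathToRoot.mp hi).1
  have hcs := sum_sq_le_sum_mul_sum_of_sq_le_mul (pathToRoot μ r j)
    (r := fun i => y i - y (μ i)) (fun i hi => div_nonneg (sq_nonneg _) (hs' i hi).le)
    (fun i hi => (hs' i hi).le) (fun i hi => (div_mul_cancel₀ _ (hs' i hi).ne').ge)
  rwa [sum_pathToRoot_sub_parent hμr hroot, hy, sub_zero,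
    sum_pathToRoot_parent_dist hμr hroot ha_r ha_edge, mul_comm] at hcs

theorem pos_of_ne_root (hμr : μ r = r) (hroot : ∀ i, ∃ k, μ^[k] i = r)
    {s : V → V → ℝ} (hs : ∀ i, i ≠ r → 0 < s (μ i) i) {a : V → ℝ} (ha_r : a r = 0)
    (ha_edge : ∀ i, i ≠ r → a i = a (μ i) + s (μ i) i) {j : V} (hj : j ≠ r) : 0 < a j := by
  rw [← sum_pathToRoot_parent_dist hμr hroot ha_r ha_edge]
  exact sum_pos (fun i hi => hs i (mem_pathToRoot.mp hi).1)
    ⟨j, mem_pathToRoot.mpr ⟨hj, 0, rfl⟩⟩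

end RootedTree

section Subtree

variable {m : ℕ} {μ : Fin (m + 1) → Fin (m + 1)}

theorem sum_mul_subtreeSum (a c : Fin (m + 1) → ℝ) :
    ∑ i ∈ univ.filter (fun i => i ≠ 0), c i * subtreeSum μ a i
      = ∑ j, a j * ∑ i ∈ pathToRoot μ 0 j, c i := by
  simp only [subtreeSum, mul_sum]
  rw [sum_comm' (t' := univ) (s' := pathToRoot μ 0) fun i j => by simp [mem_pathToRoot]]
  simp only [mul_comm]

theorem sum_parent_dist_mul_subtreeSum (hμ0 : μ 0 = 0) (hroot : ∀ i, ∃ k, μ^[k] i = 0)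
    {s : Fin (m + 1) → Fin (m + 1) → ℝ} {a : Fin (m + 1) → ℝ} (ha0 : a 0 = 0)
    (ha_edge : ∀ i, i ≠ 0 → a i = a (μ i) + s (μ i) i) :
    ∑ i ∈ univ.filter (fun i => i ≠ 0), s (μ i) i * subtreeSum μ a i
      = ∑ l ∈ univ.filter (fun l => l ≠ 0), a l ^ 2 := by
  rw [sum_mul_subtreeSum, sum_filter_of_ne fun l _ hl => by rintro rfl; simp [ha0] at hl]
  simp only [sum_pathToRoot_parent_dist hμ0 hroot ha0 ha_edge, sq]

theorem sum_sq_le_sum_mul_subtreeSum (hμ0 : μ 0 = 0) (hroot : ∀ i, ∃ k, μ^[k] i = 0)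
    {s : Fin (m + 1) → Fin (m + 1) → ℝ} (hs : ∀ i, i ≠ 0 → 0 < s (μ i) i)
    {a : Fin (m + 1) → ℝ} (ha0 : a 0 = 0) (ha_edge : ∀ i, i ≠ 0 → a i = a (μ i) + s (μ i) i)
    {y : Fin (m + 1) → ℝ} (hy : y 0 = 0) :
    ∑ l ∈ univ.filter (fun l => l ≠ 0), y l ^ 2
      ≤ ∑ i ∈ univ.filter (fun i => i ≠ 0), (y i - y (μ i)) ^ 2 / s (μ i) i * subtreeSum μ a i := by
  rw [sum_mul_subtreeSum]
  exact (sum_le_sum_of_subset_of_nonneg (filter_subset _ _) fun _ _ _ => sq_nonneg _).trans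
    (sum_le_sum fun j _ => sq_le_mul_sum_pathToRoot hμ0 hroot hs ha0 ha_edge hy j)

end Subtree

section TreeAllocation

variable {V : Type*} [DecidableEq V] {μ : V → V} {r : V}

def treeAllocation (μ : V → V) (r : V) (c : V → ℝ) (p q : V) : ℝ :=
  (if p ≠ r ∧ μ p = q then c p else 0) + (if q ≠ r ∧ μ q = p then c q else 0)

theorem ite_parent_eq_treeAllocation (hμr : μ r = r) (hroot : ∀ i, ∃ k, μ^[k] i = r)
    (f : V → V → ℝ) :
    (fun p q => if p ≠ r ∧ μ p = q then f q p else if q ≠ r ∧ μ q = p then f p q else 0)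
      = treeAllocation μ r (fun p => f (μ p) p) := by
  funext p q
  by_cases hp : p ≠ r ∧ μ p = q
  · obtain ⟨hpr, rfl⟩ := hp
    have hq : ¬(μ p ≠ r ∧ μ (μ p) = p) := fun hq =>
      hpr (eq_root_of_isPeriodicPt hμr hroot two_pos (show μ^[2] p = p from hq.2))
    simp [treeAllocation, hpr, hq]
  · by_cases hq : q ≠ r ∧ μ q = p
    · obtain ⟨hqr, rfl⟩ := hq
      simp [treeAllocation, hp, hqr]
    · simp [treeAllocation, hp, hq]

theorem treeAllocation_self (hμr : μ r = r) (hroot : ∀ i, ∃ k, μ^[k] i = r) (c : V → ℝ)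
    (p : V) : treeAllocation μ r c p p = 0 := by
  have : ¬(p ≠ r ∧ μ p = p) := fun h => parent_ne_self hμr hroot h.1 h.2
  simp [treeAllocation, this]

theorem treeAllocation_comm (c : V → ℝ) (p q : V) :
    treeAllocation μ r c p q = treeAllocation μ r c q p :=
  add_comm _ _

variable [Fintype V]

theorem sum_sum_ite_parent (f : V → V → ℝ) :
    ∑ p, ∑ q, (if p ≠ r ∧ μ p = q then f p q else 0)
      = ∑ p ∈ univ.filter (fun p => p ≠ r), f p (μ p) := by
  simp [ite_and, sum_filter]

theorem sum_sum_treeAllocation_mul (c : V → ℝ) {φ : V → V → ℝ} (hφ : ∀ p q, φ p q = φ q p) :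
    ∑ p, ∑ q, treeAllocation μ r c p q * φ p q
      = 2 * ∑ p ∈ univ.filter (fun p => p ≠ r), c p * φ p (μ p) := by
  simp only [treeAllocation, add_mul, ite_mul, zero_mul, sum_add_distrib]
  rw [sum_comm (f := fun p q => if q ≠ r ∧ μ q = p then c q * φ p q else 0)]
  rw [sum_sum_ite_parent (fun p q => c p * φ p q), sum_sum_ite_parent (fun p q => c p * φ q p)]
  simp only [hφ _ (μ _), two_mul]

end TreeAllocation

theorem two_mul_sum_sum_lt {ι : Type*} [Fintype ι] [LinearOrder ι] {n : ι → ι → ℝ}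
    (hn : ∀ i j, n i j = n j i) (hdiag : ∀ i, n i i = 0) :
    2 * ∑ i, ∑ j ∈ univ.filter (fun j => i < j), n i j = ∑ i, ∑ j, n i j := by
  have hsplit : ∀ i j, n i j = (if i < j then n i j else 0) + (if j < i then n i j else 0) := by
    intro i j
    rcases lt_trichotomy i j with h | rfl | h
    · simp [h, h.not_gt]
    · simp [hdiag]
    · simp [h, h.not_gt]
  have hswap : ∑ i, ∑ j, (if j < i then n i j else 0) = ∑ i, ∑ j, (if i < j then n i j else 0) := by
    rw [sum_comm]
    simp only [hn]
  simp only [sum_filter]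
  conv_rhs => enter [2, i, 2, j]; rw [hsplit]
  simp only [sum_add_distrib, hswap]
  ring

theorem sum_sum_mul_sub_sq {V : Type*} [Fintype V] {w : V → V → ℝ}
    (hw : ∀ p q, w p q = w q p) (y : V → ℝ) :
    ∑ p, ∑ q, w p q * (y p - y q) ^ 2 = 2 * ∑ p, y p * ∑ q, w p q * (y p - y q) := by
  have hswap : ∑ p, ∑ q, w p q * (-y q * (y p - y q)) = ∑ p, ∑ q, w p q * (y p * (y p - y q)) := by
    rw [sum_comm]
    refine sum_congr rfl fun p _ => sum_congr rfl fun q _ => ?_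
    rw [hw]
    ring
  calc ∑ p, ∑ q, w p q * (y p - y q) ^ 2
      = ∑ p, ∑ q, w p q * (y p * (y p - y q)) + ∑ p, ∑ q, w p q * (-y q * (y p - y q)) := by
        rw [← sum_add_distrib]
        refine sum_congr rfl fun p _ => ?_
        rw [← sum_add_distrib]
        exact sum_congr rfl fun q _ => by ring
    _ = 2 * ∑ p, y p * ∑ q, w p q * (y p - y q) := by
        rw [hswap, ← two_mul]
        simp only [mul_sum, mul_left_comm (y _)]

section Fisher

variable {m : ℕ} {s n : Fin (m + 1) → Fin (m + 1) → ℝ}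

theorem fisherMat_isHermitian (hn : ∀ p q, n p q = n q p) (hs : ∀ p q, s p q = s q p) :
    (fisherMat s n).IsHermitian := by
  ext i j
  by_cases h : i = j
  · simp [h]
  · simp [fisherMat, h, Ne.symm h, hn j.succ, hs j.succ]

theorem fisherMat_apply_eq_sub (i j : Fin m) :
    fisherMat s n i j = (if i = j then ∑ k, n i.succ k / s i.succ k ^ 2 else 0)
      - n i.succ j.succ / s i.succ j.succ ^ 2 := by
  by_cases h : i = j
  · subst h
    simp [fisherMat, filter_ne', sum_erase_eq_sub]
  · simp [fisherMat, h]

theorem fisherMat_mulVec_tail {y : Fin (m + 1) → ℝ} (hy : y 0 = 0) (i : Fin m) :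
    (fisherMat s n *ᵥ Fin.tail y) i = ∑ q, n i.succ q / s i.succ q ^ 2 * (y i.succ - y q) := by
  simp only [mulVec, dotProduct, fisherMat_apply_eq_sub, sub_mul, ite_mul, zero_mul,
    sum_sub_distrib, sum_ite_eq, mem_univ, if_true, mul_sub]
  rw [Fin.sum_univ_succ (fun q => n i.succ q / s i.succ q ^ 2 * y q), hy, mul_zero, zero_add]
  simp [Fin.tail, sum_mul]

theorem two_mul_dotProduct_fisherMat_mulVec_tail (hn : ∀ p q, n p q = n q p)
    (hs : ∀ p q, s p q = s q p) {y : Fin (m + 1) → ℝ} (hy : y 0 = 0) :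
    2 * (Fin.tail y ⬝ᵥ fisherMat s n *ᵥ Fin.tail y)
      = ∑ p, ∑ q, n p q / s p q ^ 2 * (y p - y q) ^ 2 := by
  rw [sum_sum_mul_sub_sq (fun p q => by rw [hn, hs]), Fin.sum_univ_succ, hy, zero_mul, zero_add]
  simp only [dotProduct, fisherMat_mulVec_tail hy, Fin.tail]

theorem dotProduct_tail_self (y : Fin (m + 1) → ℝ) :
    Fin.tail y ⬝ᵥ Fin.tail y = ∑ l ∈ univ.filter (fun l => l ≠ 0), y l ^ 2 := by
  rw [sum_filter, Fin.sum_univ_succ]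
  simp [dotProduct, Fin.tail, sq]

theorem Feasible.sum_sum_eq {N : ℝ} (hn : Feasible N n) : ∑ i, ∑ j, n i j = 2 * N := by
  rw [← two_mul_sum_sum_lt hn.2.1 hn.2.2.1, hn.2.2.2]

theorem Feasible.dotProduct_fisherMat_mulVec_tail_le {N : ℝ} (hn : Feasible N n)
    (hs : ∀ p q, p ≠ q → 0 < s p q) (hs_symm : ∀ p q, s p q = s q p) {y : Fin (m + 1) → ℝ}
    (hy : y 0 = 0) (hy_le : ∀ p q, p ≠ q → |y p - y q| ≤ s p q) :
    Fin.tail y ⬝ᵥ fisherMat s n *ᵥ Fin.tail y ≤ N := by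
  have hterm : ∀ p q, n p q / s p q ^ 2 * (y p - y q) ^ 2 ≤ n p q := by
    intro p q
    rcases eq_or_ne p q with rfl | hpq
    · simpa using hn.1 p p
    · have hspq := hs p q hpq
      rw [div_mul_eq_mul_div, div_le_iff₀ (by positivity)]
      refine mul_le_mul_of_nonneg_left ?_ (hn.1 p q)
      exact sq_le_sq.mpr ((hy_le p q hpq).trans (le_abs_self _))
  have hsum := sum_le_sum fun p (_ : p ∈ univ) => sum_le_sum fun q (_ : q ∈ univ) => hterm p q
  linarith [two_mul_dotProduct_fisherMat_mulVec_tail hn.2.1 hs_symm hy, hn.sum_sum_eq]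

theorem Feasible.le_sSup_spectrum_inv_fisherMat {N : ℝ} (hn : Feasible N n)
    (hpd : (fisherMat s n).PosDef) (hs : ∀ p q, p ≠ q → 0 < s p q)
    (hs_symm : ∀ p q, s p q = s q p) {a : Fin (m + 1) → ℝ} (ha0 : a 0 = 0)
    (ha_le : ∀ p q, p ≠ q → |a p - a q| ≤ s p q)
    (hS : 0 < ∑ l ∈ univ.filter (fun l => l ≠ 0), a l ^ 2) :
    (∑ l ∈ univ.filter (fun l => l ≠ 0), a l ^ 2) / N ≤ sSup (spectrum ℝ (fisherMat s n)⁻¹) := by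
  have hne : Fin.tail a ≠ 0 := fun h => hS.ne' (by rw [← dotProduct_tail_self, h, zero_dotProduct])
  have hle : Fin.tail a ⬝ᵥ fisherMat s n *ᵥ Fin.tail a
      ≤ N / (∑ l ∈ univ.filter (fun l => l ≠ 0), a l ^ 2) * (Fin.tail a ⬝ᵥ Fin.tail a) := by
    rw [dotProduct_tail_self, div_mul_cancel₀ N hS.ne']
    exact hn.dotProduct_fisherMat_mulVec_tail_le hs hs_symm ha0 ha_le
  simpa using hpd.inv_le_sSup_spectrum_inv hne hle

theorem feasible_treeAllocation {μ : Fin (m + 1) → Fin (m + 1)} (hμ0 : μ 0 = 0)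
    (hroot : ∀ i, ∃ k, μ^[k] i = 0) {c : Fin (m + 1) → ℝ} (hc : ∀ p, p ≠ 0 → 0 ≤ c p) {N : ℝ}
    (hN : ∑ p ∈ univ.filter (fun p => p ≠ 0), c p = N) :
    Feasible N (treeAllocation μ 0 c) := by
  have hsymm := treeAllocation_comm (μ := μ) (r := 0) c
  have hdiag := treeAllocation_self hμ0 hroot c
  have hnonneg : ∀ p q, 0 ≤ treeAllocation μ 0 c p q := fun p q =>
    add_nonneg (by split_ifs with h; exacts [hc p h.1, le_rfl])
      (by split_ifs with h; exacts [hc q h.1, le_rfl])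
  refine ⟨hnonneg, hsymm, hdiag, ?_⟩
  have h2 := two_mul_sum_sum_lt hsymm hdiag
  have hsum := sum_sum_treeAllocation_mul (μ := μ) (r := 0) c (φ := fun _ _ => (1 : ℝ))
    fun _ _ => rfl
  simp only [mul_one, hN] at hsum
  linarith

theorem feasible_treeAllocation_subtreeSum {μ : Fin (m + 1) → Fin (m + 1)} (hμ0 : μ 0 = 0)
    (hroot : ∀ i, ∃ k, μ^[k] i = 0) (hs : ∀ i, i ≠ 0 → 0 < s (μ i) i) {a : Fin (m + 1) → ℝ}
    (ha0 : a 0 = 0) (ha_edge : ∀ i, i ≠ 0 → a i = a (μ i) + s (μ i) i) {N : ℝ} (hN : 0 ≤ N)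
    (hS : 0 < ∑ l ∈ univ.filter (fun l => l ≠ 0), a l ^ 2) :
    Feasible N (treeAllocation μ 0 fun p =>
      N / (∑ l ∈ univ.filter (fun l => l ≠ 0), a l ^ 2) * (s (μ p) p * subtreeSum μ a p)) := by
  have ha : ∀ j, 0 ≤ a j := fun j => by
    rcases eq_or_ne j 0 with rfl | hj
    exacts [ha0.ge, (pos_of_ne_root hμ0 hroot hs ha0 ha_edge hj).le]
  refine feasible_treeAllocation hμ0 hroot (fun p hp => ?_) ?_
  · exact mul_nonneg (div_nonneg hN hS.le)
      (mul_nonneg (hs p hp).le (sum_nonneg fun j _ => ha j))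
  · rw [← mul_sum, sum_parent_dist_mul_subtreeSum hμ0 hroot ha0 ha_edge]
    exact div_mul_cancel₀ N hS.ne'

theorem le_dotProduct_fisherMat_treeAllocation_mulVec {μ : Fin (m + 1) → Fin (m + 1)}
    (hμ0 : μ 0 = 0) (hroot : ∀ i, ∃ k, μ^[k] i = 0) (hs : ∀ i, i ≠ 0 → 0 < s (μ i) i)
    (hs_symm : ∀ p q, s p q = s q p) {a : Fin (m + 1) → ℝ} (ha0 : a 0 = 0)
    (ha_edge : ∀ i, i ≠ 0 → a i = a (μ i) + s (μ i) i) {κ : ℝ} (hκ : 0 ≤ κ) (x : Fin m → ℝ) :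
    κ * (x ⬝ᵥ x) ≤ x ⬝ᵥ fisherMat s
      (treeAllocation μ 0 fun p => κ * (s (μ p) p * subtreeSum μ a p)) *ᵥ x := by
  obtain ⟨y, hy, rfl⟩ : ∃ y : Fin (m + 1) → ℝ, y 0 = 0 ∧ Fin.tail y = x :=
    ⟨Fin.cons 0 x, rfl, Fin.tail_cons _ _⟩
  have hquad := two_mul_dotProduct_fisherMat_mulVec_tail
    (treeAllocation_comm (μ := μ) (r := 0) fun p => κ * (s (μ p) p * subtreeSum μ a p)) hs_symm hy
  simp only [div_mul_eq_mul_div, mul_div_assoc] at hquad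
  rw [sum_sum_treeAllocation_mul _ fun p q => by rw [hs_symm, ← neg_sub, neg_sq]] at hquad
  have hedge : ∀ p ∈ univ.filter (fun p => p ≠ 0),
      κ * (s (μ p) p * subtreeSum μ a p) * ((y p - y (μ p)) ^ 2 / s p (μ p) ^ 2)
        = κ * ((y p - y (μ p)) ^ 2 / s (μ p) p * subtreeSum μ a p) := by
    intro p hp
    have hsp := hs p (mem_filter.mp hp).2
    rw [hs_symm p]
    field_simp
  rw [sum_congr rfl hedge, ← mul_sum] at hquad
  rw [dotProduct_tail_self]
  have hcs := sum_sq_le_sum_mul_subtreeSum hμ0 hroot hs ha0 ha_edge hy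
  linarith [mul_le_mul_of_nonneg_left hcs hκ]

end Fisher

/-- the `E`-optimal theorem: for a difference network with positive
fluctuations `s`, the spectral norm `‖C({n_e})‖₂ = λ_max (F({n_e})⁻¹)`, minimized
over feasible allocations `n_e ≥ 0` with `Σ_e n_e = N`, attains its minimum value
`(Σ_{i=1}^m a i ²)/N` at the allocation
`n_{i,μ i} = N · s_{i,μ i} · (Σ_{j∈T_i} a j)/(Σ_i a i ²)` supported on a
shortest-path tree (parent map `μ`), where `a i` is the shortest-path distance
from vertex `0` to `i`. -/
theorem E_optimal_tree {m : ℕ} (hm : 0 < m)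
    (s : Fin (m + 1) → Fin (m + 1) → ℝ)
    (hs : ∀ i j, i ≠ j → 0 < s i j) (hs_symm : ∀ i j, s i j = s j i)
    (μ : Fin (m + 1) → Fin (m + 1)) (hμ0 : μ 0 = 0)
    (hroot : ∀ i, ∃ k, μ^[k] i = 0)
    (a : Fin (m + 1) → ℝ) (ha0 : a 0 = 0)
    (ha_edge : ∀ i, i ≠ 0 → a i = a (μ i) + s (μ i) i)
    (ha_tri : ∀ i j, i ≠ j → |a i - a j| ≤ s i j)
    (N : ℝ) (hN : 0 < N)
    (nstar : Fin (m + 1) → Fin (m + 1) → ℝ)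
    (hnstar : nstar = fun i j =>
      if i ≠ 0 ∧ μ i = j then
        N * s j i * subtreeSum μ a i / ∑ l ∈ univ.filter (fun l => l ≠ 0), a l ^ 2
      else if j ≠ 0 ∧ μ j = i then
        N * s i j * subtreeSum μ a j / ∑ l ∈ univ.filter (fun l => l ≠ 0), a l ^ 2
      else 0) :
    IsLeast
      {t : ℝ | ∃ n, Feasible N n ∧ (fisherMat s n).PosDef ∧
        t = sSup (spectrum ℝ ((fisherMat s n)⁻¹))}
      ((∑ l ∈ univ.filter (fun l => l ≠ 0), a l ^ 2) / N) ∧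
    Feasible N nstar ∧ (fisherMat s nstar).PosDef ∧
    sSup (spectrum ℝ ((fisherMat s nstar)⁻¹))
      = (∑ l ∈ univ.filter (fun l => l ≠ 0), a l ^ 2) / N := by
  set S := ∑ l ∈ univ.filter (fun l => l ≠ 0), a l ^ 2
  have hs_edge : ∀ i, i ≠ 0 → 0 < s (μ i) i := fun i hi => hs _ _ (parent_ne_self hμ0 hroot hi)
  have hS : 0 < S := by
    have hv : (⟨0, hm⟩ : Fin m).succ ≠ 0 := Fin.succ_ne_zero _
    exact sum_pos' (fun _ _ => sq_nonneg _) ⟨_, mem_filter.mpr ⟨mem_univ _, hv⟩,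
      pow_pos (pos_of_ne_root hμ0 hroot hs_edge ha0 ha_edge hv) 2⟩
  have hκ : 0 < N / S := div_pos hN hS
  have hnstar' : nstar = treeAllocation μ 0 fun p => N / S * (s (μ p) p * subtreeSum μ a p) := by
    rw [hnstar, ite_parent_eq_treeAllocation hμ0 hroot
      (fun q p => N * s q p * subtreeSum μ a p / S)]
    congr 1
    funext p
    ring
  have hfeas : Feasible N nstar :=
    hnstar' ▸ feasible_treeAllocation_subtreeSum hμ0 hroot hs_edge ha0 ha_edge hN.le hS
  have hF : ∀ x, N / S * (x ⬝ᵥ x) ≤ x ⬝ᵥ fisherMat s nstar *ᵥ x := hnstar' ▸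
    le_dotProduct_fisherMat_treeAllocation_mulVec hμ0 hroot hs_edge hs_symm ha0
      ha_edge hκ.le
  have hherm := fisherMat_isHermitian hfeas.2.1 hs_symm
  have hpd : (fisherMat s nstar).PosDef := hherm.posDef_of_forall_mul_dotProduct_le hκ hF
  have hlower : ∀ n, Feasible N n → (fisherMat s n).PosDef →
      S / N ≤ sSup (spectrum ℝ (fisherMat s n)⁻¹) := fun n hn hpd =>
    hn.le_sSup_spectrum_inv_fisherMat hpd hs hs_symm ha0 ha_tri hS
  have hsup : sSup (spectrum ℝ (fisherMat s nstar)⁻¹) = S / N :=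
    le_antisymm (by simpa using hherm.sSup_spectrum_inv_le hκ hF) (hlower nstar hfeas hpd)
  exact ⟨⟨⟨nstar, hfeas, hpd, hsup.symm⟩, fun t ⟨n, hn, hpd, ht⟩ => ht ▸ hlower n hn hpd⟩,
    hfeas, hpd, hsup⟩
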